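/- Let M be a unique expansion matroid on a finite ground set E with rank r(M) > 0. Then for every base B of M and every member D of the forming base family F(M), |B ∩ D| = 1. -/

import Mathlib

open Set

variable {α : Type*}

/-- The rank of a set `X` in a matroid `M`: the largest cardinality of an
independent subset of `X`. -/
noncomputable def Matroid.rSet (M : Matroid α) (X : Set α) : ℕ :=
  sSup {n | ∃ I, M.Indep I ∧ I ⊆ X ∧ I.ncard = n}

/-- The rank of a matroid `M`. -/
noncomputable def Matroid.rank (M : Matroid α) : ℕ :=
  M.rSet M.E

/-- A secondary base of `M` is an independent set of cardinality `r(M) - 1`. -/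
def Matroid.SecondaryBase (M : Matroid α) (A : Set α) : Prop :=
  M.Indep A ∧ A.ncard = M.rank - 1

/-- `K_M(X) = {a ∈ E | r(X ∪ {a}) = r(X) + 1}`. -/
def Matroid.K (M : Matroid α) (X : Set α) : Set α :=
  {a ∈ M.E | M.rSet (X ∪ {a}) = M.rSet X + 1}

/-- The forming base family `F(M) = {K_M(A) | A a secondary base of M}`. -/
def Matroid.FBF (M : Matroid α) : Set (Set α) :=
  {D | ∃ A, M.SecondaryBase A ∧ D = M.K A}

/-- The forming base family of `M` with respect to a base `B`:
`F_M(B) = {K_M(A) | A a secondary base of M with A ⊆ B}`. -/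
def Matroid.FBFwrt (M : Matroid α) (B : Set α) : Set (Set α) :=
  {D | ∃ A, M.SecondaryBase A ∧ A ⊆ B ∧ D = M.K A}

/-- A family `P` of sets is a partition of `S` if `∅ ∉ P`, `⋃ P = S`, and
distinct members of `P` are disjoint. -/
def IsPartitionOn (P : Set (Set α)) (S : Set α) : Prop :=
  ∅ ∉ P ∧ ⋃₀ P = S ∧ ∀ K ∈ P, ∀ L ∈ P, K ≠ L → K ∩ L = ∅

/-- `M` is a unique expansion matroid if for every base `B` and secondary base `A`,
there is at most one element of `B` completing `A` to a base. -/
def Matroid.UniqueExpansion (M : Matroid α) : Prop :=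
  ∀ B, M.IsBase B → ∀ A, M.SecondaryBase A → ∀ e₁ ∈ B, ∀ e₂ ∈ B,
    M.IsBase (A ∪ {e₁}) → M.IsBase (A ∪ {e₂}) → e₁ = e₂

/-- `M` is a union minimal matroid if no proper subfamily of its base family with
the same union is the base family of a matroid on the same ground set. -/
def Matroid.UnionMinimal (M : Matroid α) : Prop :=
  ∀ M₁ : Matroid α, M₁.E = M.E → {B | M₁.IsBase B} ⊆ {B | M.IsBase B} →
    ⋃₀ {B | M₁.IsBase B} = ⋃₀ {B | M.IsBase B} → {B | M₁.IsBase B} = {B | M.IsBase B}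

/-- `M` is an intersection minimal matroid if no proper subfamily of its base family
with the same intersection is the base family of a matroid on the same ground set. -/
def Matroid.InterMinimal (M : Matroid α) : Prop :=
  ∀ M₁ : Matroid α, M₁.E = M.E → {B | M₁.IsBase B} ⊆ {B | M.IsBase B} →
    ⋂₀ {B | M₁.IsBase B} = ⋂₀ {B | M.IsBase B} → {B | M₁.IsBase B} = {B | M.IsBase B}

/-- `M` is a unique exchange matroid if for bases `B₁, B₂` and `x ∈ B₁ - B₂`, there is
at most one `y ∈ B₂ - B₁` with `(B₁ - {x}) ∪ {y}` a base. -/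
def Matroid.UniqueExchange (M : Matroid α) : Prop :=
  ∀ B₁ B₂, M.IsBase B₁ → M.IsBase B₂ → ∀ x ∈ B₁ \ B₂, ∀ y₁ ∈ B₂ \ B₁, ∀ y₂ ∈ B₂ \ B₁,
    M.IsBase ((B₁ \ {x}) ∪ {y₁}) → M.IsBase ((B₁ \ {x}) ∪ {y₂}) → y₁ = y₂


section Aux

variable {M : Matroid α} {X I : Set α}

lemma aux_bdd (hE : M.E.Finite) : BddAbove {n | ∃ I, M.Indep I ∧ I ⊆ X ∧ I.ncard = n} := by
  refine ⟨M.E.ncard, ?_⟩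
  rintro n ⟨I, hI, -, rfl⟩
  exact Set.ncard_le_ncard hI.subset_ground hE

lemma aux_le_rSet (hE : M.E.Finite) (hI : M.Indep I) (hIX : I ⊆ X) :
    I.ncard ≤ M.rSet X :=
  le_csSup (aux_bdd hE) ⟨I, hI, hIX, rfl⟩

lemma aux_rSet_spec (hE : M.E.Finite) :
    ∃ I, M.Indep I ∧ I ⊆ X ∧ I.ncard = M.rSet X := by
  have h : M.rSet X ∈ {n | ∃ I, M.Indep I ∧ I ⊆ X ∧ I.ncard = n} :=
    Nat.sSup_mem ⟨0, ∅, M.empty_indep, empty_subset X, by simp⟩ (aux_bdd hE)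
  exact h

lemma aux_rSet_indep (hE : M.E.Finite) (hX : M.Indep X) : M.rSet X = X.ncard := by
  refine le_antisymm ?_ (aux_le_rSet hE hX subset_rfl)
  obtain ⟨I, hI, hIX, hcard⟩ := aux_rSet_spec (M := M) (X := X) hE
  rw [← hcard]
  exact Set.ncard_le_ncard hIX (hE.subset hX.subset_ground)

lemma aux_rank_base (hE : M.E.Finite) {B : Set α} (hB : M.IsBase B) :
    M.rank = B.ncard := by
  have hBfin : B.Finite := hE.subset hB.subset_ground
  refine le_antisymm ?_ (aux_le_rSet hE hB.indep hB.subset_ground)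
  obtain ⟨I, hI, hIE, hcard⟩ := aux_rSet_spec (M := M) (X := M.E) hE
  rw [Matroid.rank, ← hcard]
  obtain ⟨B', hB', hIB'⟩ := hI.exists_isBase_superset
  calc I.ncard ≤ B'.ncard := Set.ncard_le_ncard hIB' (hE.subset hB'.subset_ground)
    _ = B.ncard := hB'.ncard_eq_ncard_of_isBase hB

lemma aux_base_of_card (hE : M.E.Finite) (hI : M.Indep I) (hcard : I.ncard = M.rank) :
    M.IsBase I := by
  obtain ⟨B', hB', hIB'⟩ := hI.exists_isBase_superset
  have : I = B' := Set.eq_of_subset_of_ncard_le hIB'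
    (by rw [hcard, aux_rank_base hE hB']) (hE.subset hB'.subset_ground)
  rwa [this]

end Aux

theorem stmt_5 (M : Matroid α) (hE : M.E.Finite) (hr : 0 < M.rank)
    (hM : M.UniqueExpansion) (B : Set α) (hB : M.IsBase B)
    (D : Set α) (hD : D ∈ M.FBF) :
    (B ∩ D).ncard = 1 := by
  obtain ⟨A, ⟨hAind, hAcard⟩, rfl⟩ := hD
  have hAfin : A.Finite := hE.subset hAind.subset_ground
  have hrB : M.rank = B.ncard := aux_rank_base hE hB
  have hrSA : M.rSet A = M.rank - 1 := by rw [aux_rSet_indep hE hAind, hAcard]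
  -- every element of B ∩ K A gives a base A ∪ {e}
  have key : ∀ e ∈ B ∩ M.K A, M.IsBase (A ∪ {e}) := by
    rintro e ⟨heB, -, hre⟩
    obtain ⟨I, hI, hIX, hIcard⟩ := aux_rSet_spec (M := M) (X := A ∪ {e}) hE
    have hIcard' : I.ncard = M.rank := by
      rw [hIcard, hre, hrSA]; omega
    have hXfin : (A ∪ {e}).Finite := hAfin.union (finite_singleton e)
    have hXcard : (A ∪ {e}).ncard ≤ M.rank := by
      calc (A ∪ {e}).ncard ≤ A.ncard + ({e} : Set α).ncard :=
            Set.ncard_union_le A {e}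
        _ = M.rank - 1 + 1 := by rw [hAcard, Set.ncard_singleton]
        _ ≤ M.rank := by omega
    have hIeq : I = A ∪ {e} := Set.eq_of_subset_of_ncard_le hIX
      (by rw [hIcard']; exact hXcard) hXfin
    exact aux_base_of_card hE (hIeq ▸ hI) (hIeq ▸ hIcard')
  -- existence of such an element
  have hAB : A.ncard < B.ncard := by rw [hAcard, ← hrB]; omega
  have hAnotbase : ¬ M.IsBase A := fun h => by
    rw [h.ncard_eq_ncard_of_isBase hB] at hAB; omega
  obtain ⟨e, heBA, hins⟩ := hAind.exists_insert_of_not_isBase hAnotbase hB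
  have hinsbase : M.IsBase (insert e A) := by
    refine aux_base_of_card hE hins ?_
    rw [Set.ncard_insert_of_notMem heBA.2 hAfin, hAcard]; omega
  have heK : e ∈ M.K A := by
    refine ⟨hB.subset_ground heBA.1, ?_⟩
    have : A ∪ {e} = insert e A := by rw [union_singleton]
    rw [this, aux_rSet_indep hE hins, Set.ncard_insert_of_notMem heBA.2 hAfin,
      hAcard, hrSA]
  rw [Set.ncard_eq_one]
  refine ⟨e, subset_antisymm ?_ ?_⟩
  · rintro x hx
    have hx1 : M.IsBase (A ∪ {x}) := key x hx
    have he1 : M.IsBase (A ∪ {e}) := by rwa [union_singleton]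
    exact hM B hB A ⟨hAind, hAcard⟩ x hx.1 e heBA.1 hx1 he1
  · rintro x rfl
    exact ⟨heBA.1, heK⟩
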